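/- arXiv:1601.02633 — 2 statements merged into one kernel-verified Lean document; each statement's English description precedes it below -/
import Mathlib

section
/- Let Λ be the Weyl orbit of a minuscule weight of an irreducible simply-laced root system with simple roots α_1, ..., α_r. Then the matrix C̃ with entries C̃_{ij} = Σ_{ν ∈ Λ} ⟨α_i, ν⟩⟨ν, α_j⟩ is a positive integer multiple of the Cartan matrix: C̃_{ij} = k·⟨α_i, α_j⟩, where k = |{ν ∈ Λ | ⟨ν, α_i⟩ = 1}| (independent of i). -/
/-!
For a root `α` of squared length 2, the reflection `s_α` maps the weights of `Λ` with
`⟪ν, α⟫ = -1` bijectively onto those with `⟪ν, α⟫ = 1` via `ν ↦ ν + α`, and minuscule weights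
have no other nonzero pairings with `α`. Hence `∑ ν, ⟪α, ν⟫ ⟪ν, β⟫` telescopes to
`#{ν | ⟪ν, α⟫ = 1} • ⟪α, β⟫`. The count is the same for all roots because the Weyl group acts
transitively on the roots while permuting `Λ`, and it is positive since some weight pairs
nontrivially with `α`.
-/

open scoped RealInnerProductSpace
open Finset

section MinusculeWeights

variable {E : Type*} [NormedAddCommGroup E] [InnerProductSpace ℝ E] {Λ : Finset E} {α : E}

lemma add_mem_filter_inner_eq_one (hα : ⟪α, α⟫ = 2)
    (hrefl : ∀ μ ∈ Λ, μ - ⟪μ, α⟫ • α ∈ Λ) {ν : E} (hν : ν ∈ {ν ∈ Λ | ⟪ν, α⟫ = -1}) :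
    ν + α ∈ {ν ∈ Λ | ⟪ν, α⟫ = 1} := by
  rw [mem_filter] at hν ⊢
  obtain ⟨hνΛ, hνα⟩ := hν
  refine ⟨?_, by rw [inner_add_left, hνα, hα]; norm_num⟩
  simpa [hνα] using hrefl ν hνΛ

lemma sub_mem_filter_inner_eq_neg_one (hα : ⟪α, α⟫ = 2)
    (hrefl : ∀ μ ∈ Λ, μ - ⟪μ, α⟫ • α ∈ Λ) {ν : E} (hν : ν ∈ {ν ∈ Λ | ⟪ν, α⟫ = 1}) :
    ν - α ∈ {ν ∈ Λ | ⟪ν, α⟫ = -1} := by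
  rw [mem_filter] at hν ⊢
  obtain ⟨hνΛ, hνα⟩ := hν
  refine ⟨?_, by rw [inner_sub_left, hνα, hα]; norm_num⟩
  simpa [hνα] using hrefl ν hνΛ

lemma sum_filter_inner_eq_neg_one {M : Type*} [AddCommMonoid M] (hα : ⟪α, α⟫ = 2)
    (hrefl : ∀ μ ∈ Λ, μ - ⟪μ, α⟫ • α ∈ Λ) (f : E → M) :
    ∑ ν ∈ Λ with ⟪ν, α⟫ = -1, f ν = ∑ ν ∈ Λ with ⟪ν, α⟫ = 1, f (ν - α) :=
  sum_bij' (fun ν _ ↦ ν + α) (fun ν _ ↦ ν - α)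
    (fun _ hν ↦ add_mem_filter_inner_eq_one hα hrefl hν)
    (fun _ hν ↦ sub_mem_filter_inner_eq_neg_one hα hrefl hν)
    (fun _ _ ↦ add_sub_cancel_right _ _) (fun _ _ ↦ sub_add_cancel _ _)
    (fun _ _ ↦ by rw [add_sub_cancel_right])

theorem sum_inner_mul_inner_eq_card_mul (hα : ⟪α, α⟫ = 2)
    (hrefl : ∀ μ ∈ Λ, μ - ⟪μ, α⟫ • α ∈ Λ)
    (hmin : ∀ μ ∈ Λ, ⟪μ, α⟫ = -1 ∨ ⟪μ, α⟫ = 0 ∨ ⟪μ, α⟫ = 1) (β : E) :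
    ∑ ν ∈ Λ, ⟪α, ν⟫ * ⟪ν, β⟫ = #{ν ∈ Λ | ⟪ν, α⟫ = 1} * ⟪α, β⟫ := by
  have hsplit : ∀ ν ∈ Λ, ⟪α, ν⟫ * ⟪ν, β⟫ =
      (if ⟪ν, α⟫ = 1 then ⟪ν, β⟫ else 0) + (if ⟪ν, α⟫ = -1 then -⟪ν, β⟫ else 0) := by
    intro ν hν
    rw [real_inner_comm ν α]
    rcases hmin ν hν with h | h | h <;> rw [h] <;> norm_num
  rw [sum_congr rfl hsplit, sum_add_distrib, ← sum_filter, ← sum_filter, sum_neg_distrib,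
    sum_filter_inner_eq_neg_one hα hrefl]
  simp only [inner_sub_left, sum_sub_distrib, sum_const, nsmul_eq_mul]
  ring

lemma card_filter_inner_eq_one_le_of_map (w : E ≃ₗᵢ[ℝ] E) (hw : ∀ μ ∈ Λ, w μ ∈ Λ) :
    #{ν ∈ Λ | ⟪ν, α⟫ = 1} ≤ #{ν ∈ Λ | ⟪ν, w α⟫ = 1} := by
  refine card_le_card_of_injOn w (fun ν hν ↦ ?_) w.injective.injOn
  simp only [coe_filter, Set.mem_ofPred_eq] at hν ⊢
  exact ⟨hw ν hν.1, by rw [LinearIsometryEquiv.inner_map_map, hν.2]⟩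

lemma card_filter_inner_eq_one_pos (hα : ⟪α, α⟫ = 2)
    (hrefl : ∀ μ ∈ Λ, μ - ⟪μ, α⟫ • α ∈ Λ)
    (hmin : ∀ μ ∈ Λ, ⟪μ, α⟫ = -1 ∨ ⟪μ, α⟫ = 0 ∨ ⟪μ, α⟫ = 1)
    (hnondeg : ∃ μ ∈ Λ, ⟪μ, α⟫ ≠ 0) :
    0 < #{ν ∈ Λ | ⟪ν, α⟫ = 1} := by
  obtain ⟨μ, hμ, hμα⟩ := hnondeg
  rcases hmin μ hμ with h | h | h
  · exact card_pos.mpr ⟨_, add_mem_filter_inner_eq_one hα hrefl (mem_filter.mpr ⟨hμ, h⟩)⟩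
  · exact absurd h hμα
  · exact card_pos.mpr ⟨μ, mem_filter.mpr ⟨hμ, h⟩⟩

end MinusculeWeights

theorem stmt9_general {E : Type*} [NormedAddCommGroup E] [InnerProductSpace ℝ E]
    {r : ℕ} (Φ : Set E) (αs : Fin r → E) (hαs : ∀ i, αs i ∈ Φ)
    (hlen : ∀ α ∈ Φ, ⟪α, α⟫ = 2)
    (Λ : Finset E)
    (hmin : ∀ μ ∈ Λ, ∀ α ∈ Φ, ⟪μ, α⟫ = -1 ∨ ⟪μ, α⟫ = 0 ∨ ⟪μ, α⟫ = 1)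
    (hinv : ∀ α ∈ Φ, ∀ μ ∈ Λ, μ - ⟪μ, α⟫ • α ∈ Λ)
    (W : Set (E ≃ₗᵢ[ℝ] E))
    (hWΛ : ∀ w ∈ W, ∀ μ ∈ Λ, w μ ∈ Λ)
    (htrans : ∀ α ∈ Φ, ∀ β ∈ Φ, ∃ w ∈ W, w α = β)
    (hnondeg : ∀ α ∈ Φ, ∃ μ ∈ Λ, ⟪μ, α⟫ ≠ 0) :
    ∃ k : ℕ, 0 < k ∧
      (∀ i : Fin r, k = Set.ncard {ν : E | ν ∈ Λ ∧ ⟪ν, αs i⟫ = 1}) ∧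
      ∀ i j : Fin r,
        ∑ ν ∈ Λ, ⟪αs i, ν⟫ * ⟪ν, αs j⟫ = (k : ℝ) * ⟪αs i, αs j⟫ := by
  have hcard_le : ∀ α ∈ Φ, ∀ β ∈ Φ, #{ν ∈ Λ | ⟪ν, α⟫ = 1} ≤ #{ν ∈ Λ | ⟪ν, β⟫ = 1} := by
    intro α hα β hβ
    obtain ⟨w, hw, rfl⟩ := htrans α hα β hβ
    exact card_filter_inner_eq_one_le_of_map w (hWΛ w hw)
  rcases r with _ | r
  · exact ⟨1, one_pos, finZeroElim, finZeroElim⟩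
  set α₀ := αs 0
  have hcard : ∀ i, #{ν ∈ Λ | ⟪ν, αs i⟫ = 1} = #{ν ∈ Λ | ⟪ν, α₀⟫ = 1} := fun i ↦
    le_antisymm (hcard_le _ (hαs i) _ (hαs 0)) (hcard_le _ (hαs 0) _ (hαs i))
  refine ⟨#{ν ∈ Λ | ⟪ν, α₀⟫ = 1}, card_filter_inner_eq_one_pos (hlen _ (hαs 0))
    (hinv _ (hαs 0)) (fun μ hμ ↦ hmin μ hμ _ (hαs 0)) (hnondeg _ (hαs 0)), fun i ↦ ?_,
    fun i j ↦ ?_⟩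
  · rw [← hcard i, ← coe_filter, Set.ncard_coe_finset]
  · rw [sum_inner_mul_inner_eq_card_mul (hlen _ (hαs i)) (hinv _ (hαs i))
      (fun μ hμ ↦ hmin μ hμ _ (hαs i)), hcard i]

theorem stmt9 {E : Type*} [NormedAddCommGroup E] [InnerProductSpace ℝ E]
    {r : ℕ} (Φ : Set E) (αs : Fin r → E) (hαs : ∀ i, αs i ∈ Φ)
    (hlen : ∀ α ∈ Φ, ⟪α, α⟫ = 2)
    (Λ : Finset E) (R : ℝ) (hsph : ∀ μ ∈ Λ, ‖μ‖ = R)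
    (hmin : ∀ μ ∈ Λ, ∀ α ∈ Φ, ⟪μ, α⟫ = -1 ∨ ⟪μ, α⟫ = 0 ∨ ⟪μ, α⟫ = 1)
    (hinv : ∀ α ∈ Φ, ∀ μ ∈ Λ, μ - ⟪μ, α⟫ • α ∈ Λ)
    (W : Set (E ≃ₗᵢ[ℝ] E))
    (hWΛ : ∀ w ∈ W, ∀ μ ∈ Λ, w μ ∈ Λ)
    (htrans : ∀ α ∈ Φ, ∀ β ∈ Φ, ∃ w ∈ W, w α = β)
    (hnondeg : ∀ α ∈ Φ, ∃ μ ∈ Λ, ⟪μ, α⟫ ≠ 0) :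
    ∃ k : ℕ, 0 < k ∧
      (∀ i : Fin r, k = Set.ncard {ν : E | ν ∈ Λ ∧ ⟪ν, αs i⟫ = 1}) ∧
      ∀ i j : Fin r,
        ∑ ν ∈ Λ, ⟪αs i, ν⟫ * ⟪ν, αs j⟫ = (k : ℝ) * ⟪αs i, αs j⟫ :=
  stmt9_general Φ αs hαs hlen Λ hmin hinv W hWΛ htrans hnondeg
end

section
/- Let W be a Weyl group of a root system Φ in Euclidean space E and suppose w ∈ W acts as an orthogonal involution fixing a hyperplane H pointwise and negating its orthogonal complement (i.e., w is a reflection). Then w = w_α for some root α ∈ Φ; that is, every reflection contained in a Weyl group is a reflection in a root. -/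
/-!
Let `P` be the positive half, with respect to a generic vector `z`, of the unit vectors along the
roots, and `π y = ∏ a ∈ P, ⟪a, y⟫`. For an orthogonal involution `u` permuting the roots,
`π ∘ u = (-1) ^ k • π`, where `k` counts the `a ∈ P` with `u a = -a`. A root reflection has
`k = 1`, so `π ∘ u = det u • π` on the whole group generated by root reflections. If the
reflection `w` in `v^⊥` lies in that group but no root is a multiple of `v`, then `k = 0` for `w`,
so `π z = π (w z) = -π z`, which contradicts `π z > 0`.
-/

open scoped RealInnerProductSpace

open Finset Submodule

section

variable {E : Type*} [NormedAddCommGroup E] [InnerProductSpace ℝ E]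

lemma reflection_orthogonal_singleton_apply (v x : E) :
    reflection (ℝ ∙ v)ᗮ x = x - (2 * ⟪x, v⟫ / ⟪v, v⟫) • v := by
  rw [reflection_orthogonal_apply, reflection_singleton_apply, real_inner_self_eq_norm_sq,
    real_inner_comm]
  simp only [RCLike.ofReal_real_eq_id, id]
  module

lemma reflection_orthogonal_singleton_eq_neg_iff {v x : E} :
    reflection (ℝ ∙ v)ᗮ x = -x ↔ x ∈ ℝ ∙ v := by
  rw [reflection_orthogonal_apply, neg_inj, reflection_eq_self_iff]

lemma eq_reflection_orthogonal_singleton {w : E ≃ₗᵢ[ℝ] E} {v : E} (hwv : w v = -v)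
    (hfix : ∀ x, ⟪x, v⟫ = 0 → w x = x) : w = reflection (ℝ ∙ v)ᗮ := by
  ext x
  set c := ⟪x, v⟫ / ⟪v, v⟫
  have hc : c * ⟪v, v⟫ = ⟪x, v⟫ :=
    div_mul_cancel_of_imp fun h => by rw [inner_self_eq_zero.mp h, inner_zero_right]
  have hperp : ⟪x - c • v, v⟫ = 0 := by
    rw [inner_sub_left, real_inner_smul_left, hc, sub_self]
  calc w x = w (x - c • v) + c • w v := by rw [← map_smul, ← map_add, sub_add_cancel]
    _ = x - (2 * c) • v := by rw [hfix _ hperp, hwv]; module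
    _ = reflection (ℝ ∙ v)ᗮ x := by rw [reflection_orthogonal_singleton_apply, mul_div_assoc]

lemma reflection_orthogonal_singleton_smul {v : E} {c : ℝ} (hc : c ≠ 0) :
    reflection (ℝ ∙ c • v)ᗮ = reflection (ℝ ∙ v)ᗮ := by
  simp_rw [span_singleton_smul_eq hc.isUnit]

lemma reflection_orthogonal_singleton_zero : reflection (ℝ ∙ (0 : E))ᗮ = 1 :=
  LinearIsometryEquiv.ext fun _ => reflection_mem_subspace_eq_self (by simp)

lemma det_reflection_orthogonal_singleton [FiniteDimensional ℝ E] {v : E} (hv : v ≠ 0) :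
    LinearEquiv.det (reflection (ℝ ∙ v)ᗮ).toLinearEquiv = -1 := by
  rw [linearEquiv_det_reflection, orthogonal_orthogonal, finrank_span_singleton hv, pow_one]

lemma eq_or_eq_neg_of_mem_span_singleton {a b : E} (ha : ‖a‖ = 1) (hb : ‖b‖ = 1)
    (hab : a ∈ ℝ ∙ b) : a = b ∨ a = -b := by
  obtain ⟨c, rfl⟩ := mem_span_singleton.mp hab
  rw [norm_smul, hb, mul_one, Real.norm_eq_abs] at ha
  rcases abs_eq zero_le_one |>.mp ha with rfl | rfl
  · exact .inl (one_smul ℝ b)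
  · exact .inr (neg_one_smul ℝ b)

lemma LinearIsometryEquiv.det_toLinearEquiv_one :
    (LinearEquiv.det (1 : E ≃ₗᵢ[ℝ] E).toLinearEquiv : ℝ) = 1 := by
  rw [show (1 : E ≃ₗᵢ[ℝ] E).toLinearEquiv = 1 from rfl, map_one, Units.val_one]

def reflectionGroup (Φ : Set E) : Subgroup (E ≃ₗᵢ[ℝ] E) :=
  Subgroup.closure ((fun α => reflection (ℝ ∙ α)ᗮ) '' Φ)

lemma mapsTo_of_mem_reflectionGroup {Φ : Set E}
    (hΦ : ∀ α ∈ Φ, Set.MapsTo (reflection (ℝ ∙ α)ᗮ) Φ Φ) {u : E ≃ₗᵢ[ℝ] E}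
    (hu : u ∈ reflectionGroup Φ) : Set.MapsTo u Φ Φ := by
  induction hu using Subgroup.closure_induction'' with
  | mem _ hs => obtain ⟨α, hα, rfl⟩ := hs; exact hΦ α hα
  | inv_mem _ hs => obtain ⟨α, hα, rfl⟩ := hs; rw [reflection_inv]; exact hΦ α hα
  | one => exact Set.mapsTo_id Φ
  | mul _ _ _ _ hu hv => exact hu.comp hv

section AlternatingProduct

noncomputable def positiveHalf (R : Finset E) (z : E) : Finset E := {a ∈ R | 0 < ⟪a, z⟫}

noncomputable def alternatingProduct (R : Finset E) (z y : E) : ℝ :=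
  ∏ a ∈ positiveHalf R z, ⟪a, y⟫

noncomputable def positiveRep (z x : E) : E := if 0 < ⟪x, z⟫ then x else -x

variable {R : Finset E} {z : E}

lemma mem_positiveHalf {a : E} : a ∈ positiveHalf R z ↔ a ∈ R ∧ 0 < ⟪a, z⟫ := mem_filter

lemma alternatingProduct_self_pos (R : Finset E) (z : E) : 0 < alternatingProduct R z z :=
  prod_pos fun _ ha => (mem_positiveHalf.mp ha).2

lemma positiveRep_of_pos {x : E} (hx : 0 < ⟪x, z⟫) : positiveRep z x = x := if_pos hx

lemma positiveRep_of_not_pos {x : E} (hx : ¬0 < ⟪x, z⟫) : positiveRep z x = -x := if_neg hx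

lemma positiveRep_neg {x : E} (hx : ⟪x, z⟫ ≠ 0) : positiveRep z (-x) = positiveRep z x := by
  rcases hx.lt_or_gt with hx | hx
  · rw [positiveRep_of_pos (by rwa [inner_neg_left, neg_pos]), positiveRep_of_not_pos hx.not_gt]
  · rw [positiveRep_of_pos hx, positiveRep_of_not_pos (by rw [inner_neg_left]; linarith),
      neg_neg]

lemma inner_eq_sign_mul_inner_positiveRep (x y : E) :
    ⟪x, y⟫ = (if 0 < ⟪x, z⟫ then 1 else -1) * ⟪positiveRep z x, y⟫ := by
  unfold positiveRep
  split_ifs <;> simp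

lemma positiveRep_mem_positiveHalf (hneg : ∀ a ∈ R, -a ∈ R) (hz : ∀ a ∈ R, ⟪a, z⟫ ≠ 0)
    {x : E} (hx : x ∈ R) : positiveRep z x ∈ positiveHalf R z := by
  rw [mem_positiveHalf]
  unfold positiveRep
  split_ifs with h
  · exact ⟨hx, h⟩
  · refine ⟨hneg x hx, ?_⟩
    rw [inner_neg_left, neg_pos]
    exact (not_lt.mp h).lt_of_ne (hz x hx)

variable {u : E ≃ₗᵢ[ℝ] E}

lemma inner_map_of_involutive (hu : Function.Involutive u) (x y : E) : ⟪x, u y⟫ = ⟪u x, y⟫ := by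
  rw [← u.inner_map_map, hu]

lemma positiveRep_map_mem_positiveHalf (hneg : ∀ a ∈ R, -a ∈ R) (hz : ∀ a ∈ R, ⟪a, z⟫ ≠ 0)
    (huR : ∀ a ∈ R, u a ∈ R) {a : E} (ha : a ∈ positiveHalf R z) :
    positiveRep z (u a) ∈ positiveHalf R z :=
  positiveRep_mem_positiveHalf hneg hz (huR a (mem_positiveHalf.mp ha).1)

lemma positiveRep_map_positiveRep_map (hu : Function.Involutive u) (hz : ∀ a ∈ R, ⟪a, z⟫ ≠ 0)
    {a : E} (ha : a ∈ positiveHalf R z) : positiveRep z (u (positiveRep z (u a))) = a := by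
  obtain ⟨haR, hapos⟩ := mem_positiveHalf.mp ha
  by_cases h : 0 < ⟪u a, z⟫
  · rw [positiveRep_of_pos h, hu a, positiveRep_of_pos hapos]
  · rw [positiveRep_of_not_pos h, map_neg, hu a, positiveRep_neg (hz a haR),
      positiveRep_of_pos hapos]

lemma prod_sign_eq_neg_one_pow_card [DecidableEq E] (hu : Function.Involutive u)
    (hneg : ∀ a ∈ R, -a ∈ R) (hz : ∀ a ∈ R, ⟪a, z⟫ ≠ 0) (huR : ∀ a ∈ R, u a ∈ R) :
    ∏ a ∈ positiveHalf R z, (if 0 < ⟪u a, z⟫ then (1 : ℝ) else -1) =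
      (-1) ^ #{a ∈ positiveHalf R z | u a = -a} := by
  set σ : E → ℝ := fun a => if 0 < ⟪u a, z⟫ then 1 else -1
  set ρ : E → ℝ := fun a => if u a = -a then -1 else 1
  have hρ : ∏ a ∈ positiveHalf R z, ρ a = (-1) ^ #{a ∈ positiveHalf R z | u a = -a} := by
    rw [prod_ite, prod_const_one, mul_one, prod_const]
  -- `σ * ρ` is invariant under the involution `a ↦ positiveRep z (u a)` of the positive half
  -- and equals `1` at its fixed points.
  have hρτ : ∀ a, ρ (positiveRep z (u a)) = ρ a := fun a => by
    refine if_congr ?_ rfl rfl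
    by_cases h : 0 < ⟪u a, z⟫
    · rw [positiveRep_of_pos h, hu a, eq_comm, neg_eq_iff_eq_neg]
    · rw [positiveRep_of_not_pos h, map_neg, hu a, neg_neg, eq_comm]
  have hστ : ∀ a ∈ positiveHalf R z, σ (positiveRep z (u a)) = σ a := fun a ha => by
    have hapos := (mem_positiveHalf.mp ha).2
    by_cases h : 0 < ⟪u a, z⟫
    · simp only [σ, positiveRep_of_pos h, hu a, if_pos h, if_pos hapos]
    · simp only [σ, positiveRep_of_not_pos h, map_neg, hu a, if_neg h, inner_neg_left, neg_pos,
        if_neg hapos.not_gt]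
  have hsq : ∀ a, (σ a * ρ a) * (σ a * ρ a) = 1 := fun a => by
    simp only [σ, ρ]; split_ifs <;> norm_num
  have hσρ : ∏ a ∈ positiveHalf R z, σ a * ρ a = 1 := by
    refine prod_involution (fun a _ => positiveRep z (u a)) (fun a ha => ?_) (fun a ha => ?_)
      (fun a ha => positiveRep_map_mem_positiveHalf hneg hz huR ha)
      (fun a ha => positiveRep_map_positiveRep_map hu hz ha)
    · rw [hστ a ha, hρτ a, hsq]
    · refine fun hne heq => hne ?_
      by_cases h : 0 < ⟪u a, z⟫
      · have hapos := (mem_positiveHalf.mp ha).2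
        have hua : u a ≠ -a := fun h' => by rw [h', inner_neg_left] at h; linarith
        simp only [σ, ρ, if_pos h, if_neg hua, one_mul]
      · rw [positiveRep_of_not_pos h, neg_eq_iff_eq_neg] at heq
        simp only [σ, ρ, if_neg h, if_pos heq]
        norm_num
  have hρsq : ((-1 : ℝ) ^ #{a ∈ positiveHalf R z | u a = -a}) ^ 2 = 1 := by
    rw [← pow_mul, mul_comm, pow_mul, neg_one_sq, one_pow]
  rw [prod_mul_distrib, hρ] at hσρ
  linear_combination (-1 : ℝ) ^ #{a ∈ positiveHalf R z | u a = -a} * hσρ -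
    (∏ a ∈ positiveHalf R z, σ a) * hρsq

theorem alternatingProduct_map_of_involutive [DecidableEq E] (hu : Function.Involutive u)
    (hneg : ∀ a ∈ R, -a ∈ R) (hz : ∀ a ∈ R, ⟪a, z⟫ ≠ 0) (huR : ∀ a ∈ R, u a ∈ R) (y : E) :
    alternatingProduct R z (u y) =
      (-1) ^ #{a ∈ positiveHalf R z | u a = -a} * alternatingProduct R z y := by
  have hmem := fun a (ha : a ∈ positiveHalf R z) =>
    positiveRep_map_mem_positiveHalf hneg hz huR ha
  have hinv := fun a (ha : a ∈ positiveHalf R z) => positiveRep_map_positiveRep_map hu hz ha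
  have hperm : ∏ a ∈ positiveHalf R z, ⟪positiveRep z (u a), y⟫ = alternatingProduct R z y :=
    prod_nbij' _ _ hmem hmem hinv hinv fun _ _ => rfl
  calc alternatingProduct R z (u y)
      = ∏ a ∈ positiveHalf R z,
          (if 0 < ⟪u a, z⟫ then (1 : ℝ) else -1) * ⟪positiveRep z (u a), y⟫ :=
        prod_congr rfl fun a _ => by
          rw [inner_map_of_involutive hu, ← inner_eq_sign_mul_inner_positiveRep]
    _ = _ := by rw [prod_mul_distrib, prod_sign_eq_neg_one_pow_card hu hneg hz huR, hperm]

lemma card_filter_reflection_eq_neg [DecidableEq E] (hneg : ∀ a ∈ R, -a ∈ R)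
    (hz : ∀ a ∈ R, ⟪a, z⟫ ≠ 0) (hunit : ∀ a ∈ R, ‖a‖ = 1) {b : E} (hb : b ∈ R) :
    #{a ∈ positiveHalf R z | reflection (ℝ ∙ b)ᗮ a = -a} = 1 := by
  rw [card_eq_one]
  refine ⟨positiveRep z b, ext fun a => ?_⟩
  simp only [mem_filter, mem_singleton, reflection_orthogonal_singleton_eq_neg_iff]
  constructor
  · rintro ⟨ha, hab⟩
    obtain ⟨haR, hapos⟩ := mem_positiveHalf.mp ha
    rcases eq_or_eq_neg_of_mem_span_singleton (hunit a haR) (hunit b hb) hab with rfl | rfl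
    · exact (positiveRep_of_pos hapos).symm
    · rw [← positiveRep_neg (hz b hb), positiveRep_of_pos hapos]
  · rintro rfl
    refine ⟨positiveRep_mem_positiveHalf hneg hz hb, ?_⟩
    by_cases h : 0 < ⟪b, z⟫
    · rw [positiveRep_of_pos h]; exact mem_span_singleton_self b
    · rw [positiveRep_of_not_pos h]; exact neg_mem (mem_span_singleton_self b)

end AlternatingProduct

lemma exists_forall_inner_ne_zero (R : Finset E) (h0 : (0 : E) ∉ R) :
    ∃ z, ∀ a ∈ R, ⟪a, z⟫ ≠ 0 := by
  obtain ⟨z, hz⟩ := Module.Dual.exists_forall_ne_zero_of_forall_exists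
    (fun a : R => innerₛₗ ℝ (a : E)) fun a =>
      ⟨a, by simpa using ne_of_mem_of_not_mem a.2 h0⟩
  exact ⟨z, fun a ha => hz ⟨a, ha⟩⟩

section UnitRoots

lemma LinearIsometryEquiv.map_normalize (u : E ≃ₗᵢ[ℝ] E) (x : E) :
    u (NormedSpace.normalize x) = NormedSpace.normalize (u x) := by
  rw [NormedSpace.normalize, NormedSpace.normalize, map_smul, u.norm_map]

variable [DecidableEq E] {Φ : Finset E}

/-- Normalizing leaves only `±a` on the line of a root `a`, also when `Φ` is not reduced. -/
noncomputable def unitRoots (Φ : Finset E) : Finset E :=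
  (Φ.image NormedSpace.normalize).erase 0

lemma mem_unitRoots {a : E} :
    a ∈ unitRoots Φ ↔ ∃ α ∈ Φ, α ≠ 0 ∧ NormedSpace.normalize α = a := by
  simp only [unitRoots, mem_erase, mem_image]
  constructor
  · rintro ⟨ha, α, hα, rfl⟩
    exact ⟨α, hα, (NormedSpace.normalize_eq_zero_iff α).not.mp ha, rfl⟩
  · rintro ⟨α, hα, hα0, rfl⟩
    exact ⟨(NormedSpace.normalize_eq_zero_iff α).not.mpr hα0, α, hα, rfl⟩

lemma zero_notMem_unitRoots : (0 : E) ∉ unitRoots Φ := notMem_erase 0 _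

lemma norm_eq_one_of_mem_unitRoots {a : E} (ha : a ∈ unitRoots Φ) : ‖a‖ = 1 := by
  obtain ⟨α, -, hα0, rfl⟩ := mem_unitRoots.mp ha
  exact NormedSpace.norm_normalize_eq_one_iff.mpr hα0

lemma map_mem_unitRoots {u : E ≃ₗᵢ[ℝ] E} (hu : Set.MapsTo u Φ Φ) {a : E}
    (ha : a ∈ unitRoots Φ) : u a ∈ unitRoots Φ := by
  obtain ⟨α, hα, hα0, rfl⟩ := mem_unitRoots.mp ha
  exact mem_unitRoots.mpr ⟨u α, hu hα, u.map_ne_zero_iff.mpr hα0, (u.map_normalize α).symm⟩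

lemma neg_mem_unitRoots (hΦ : ∀ α ∈ Φ, Set.MapsTo (reflection (ℝ ∙ α)ᗮ) Φ Φ) {a : E}
    (ha : a ∈ unitRoots Φ) : -a ∈ unitRoots Φ :=
  map_mem_unitRoots (u := .neg ℝ) (fun α hα => by
    simpa [reflection_orthogonalComplement_singleton_eq_neg] using hΦ α hα hα) ha

variable [FiniteDimensional ℝ E] {z : E}

lemma alternatingProduct_reflection (hΦ : ∀ α ∈ Φ, Set.MapsTo (reflection (ℝ ∙ α)ᗮ) Φ Φ)
    (hz : ∀ a ∈ unitRoots Φ, ⟪a, z⟫ ≠ 0) {α : E} (hα : α ∈ Φ) (y : E) :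
    alternatingProduct (unitRoots Φ) z (reflection (ℝ ∙ α)ᗮ y) =
      LinearEquiv.det (reflection (ℝ ∙ α)ᗮ).toLinearEquiv *
        alternatingProduct (unitRoots Φ) z y := by
  rcases eq_or_ne α 0 with rfl | hα0
  · rw [reflection_orthogonal_singleton_zero, LinearIsometryEquiv.det_toLinearEquiv_one, one_mul]
    rfl
  have hb : NormedSpace.normalize α ∈ unitRoots Φ := mem_unitRoots.mpr ⟨α, hα, hα0, rfl⟩
  have hr : reflection (ℝ ∙ α)ᗮ = reflection (ℝ ∙ NormedSpace.normalize α)ᗮ :=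
    (reflection_orthogonal_singleton_smul (inv_ne_zero (norm_ne_zero_iff.mpr hα0))).symm
  have hmaps : ∀ a ∈ unitRoots Φ, reflection (ℝ ∙ α)ᗮ a ∈ unitRoots Φ :=
    fun a => map_mem_unitRoots (hΦ α hα)
  rw [hr] at hmaps ⊢
  rw [alternatingProduct_map_of_involutive (reflection_involutive _)
      (fun a => neg_mem_unitRoots hΦ) hz hmaps,
    card_filter_reflection_eq_neg (fun a => neg_mem_unitRoots hΦ) hz
      (fun a => norm_eq_one_of_mem_unitRoots) hb,
    det_reflection_orthogonal_singleton (ne_of_mem_of_not_mem hb zero_notMem_unitRoots),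
    pow_one, Units.val_neg, Units.val_one]

theorem alternatingProduct_map_of_mem_reflectionGroup
    (hΦ : ∀ α ∈ Φ, Set.MapsTo (reflection (ℝ ∙ α)ᗮ) Φ Φ) (hz : ∀ a ∈ unitRoots Φ, ⟪a, z⟫ ≠ 0)
    {u : E ≃ₗᵢ[ℝ] E} (hu : u ∈ reflectionGroup (Φ : Set E)) (y : E) :
    alternatingProduct (unitRoots Φ) z (u y) =
      LinearEquiv.det u.toLinearEquiv * alternatingProduct (unitRoots Φ) z y := by
  induction hu using Subgroup.closure_induction'' generalizing y with
  | mem _ hs =>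
    obtain ⟨α, hα, rfl⟩ := hs
    exact alternatingProduct_reflection hΦ hz hα y
  | inv_mem _ hs =>
    obtain ⟨α, hα, rfl⟩ := hs
    rw [reflection_inv]
    exact alternatingProduct_reflection hΦ hz hα y
  | one => rw [LinearIsometryEquiv.det_toLinearEquiv_one, one_mul]; rfl
  | mul u v _ _ hu hv =>
    rw [LinearIsometryEquiv.coe_mul, Function.comp_apply, hu, hv,
      show (u * v).toLinearEquiv = u.toLinearEquiv * v.toLinearEquiv from rfl, map_mul,
      Units.val_mul, mul_assoc]

end UnitRoots

theorem exists_mem_span_of_reflection_mem_reflectionGroup [FiniteDimensional ℝ E] {Φ : Finset E}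
    (hΦ : ∀ α ∈ Φ, Set.MapsTo (reflection (ℝ ∙ α)ᗮ) Φ Φ) {v : E} (hv : v ≠ 0)
    (hvW : reflection (ℝ ∙ v)ᗮ ∈ reflectionGroup (Φ : Set E)) :
    ∃ α ∈ Φ, α ≠ 0 ∧ α ∈ ℝ ∙ v := by
  classical
  by_contra! hpar
  obtain ⟨z, hz⟩ := exists_forall_inner_ne_zero _ (zero_notMem_unitRoots (Φ := Φ))
  have hcount : #{a ∈ positiveHalf (unitRoots Φ) z | reflection (ℝ ∙ v)ᗮ a = -a} = 0 := by
    rw [card_eq_zero, filter_eq_empty_iff]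
    intro a ha hav
    obtain ⟨α, hα, hα0, rfl⟩ := mem_unitRoots.mp (mem_positiveHalf.mp ha).1
    rw [reflection_orthogonal_singleton_eq_neg_iff] at hav
    exact hpar α hα hα0 (NormedSpace.norm_smul_normalize α ▸ smul_mem _ _ hav)
  have h := alternatingProduct_map_of_mem_reflectionGroup hΦ hz hvW z
  rw [alternatingProduct_map_of_involutive (reflection_involutive _)
      (fun a => neg_mem_unitRoots hΦ) hz
      (fun a => map_mem_unitRoots (mapsTo_of_mem_reflectionGroup hΦ hvW)),
    hcount, pow_zero, one_mul, det_reflection_orthogonal_singleton hv, Units.val_neg,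
    Units.val_one] at h
  linarith [alternatingProduct_self_pos (unitRoots Φ) z]

end

theorem stmt17_general {E : Type*} [NormedAddCommGroup E] [InnerProductSpace ℝ E]
    [FiniteDimensional ℝ E]
    (Φ : Set E) (hfin : Φ.Finite)
    (hcl : ∀ α ∈ Φ, ∀ β ∈ Φ, β - (2 * ⟪β, α⟫ / ⟪α, α⟫) • α ∈ Φ)
    (w : E ≃ₗᵢ[ℝ] E)
    (hw : w ∈ Subgroup.closure {s : E ≃ₗᵢ[ℝ] E |
      ∃ α ∈ Φ, ∀ x, s x = x - (2 * ⟪x, α⟫ / ⟪α, α⟫) • α})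
    (v : E) (hv : v ≠ 0) (hwv : w v = -v)
    (hfix : ∀ x, ⟪x, v⟫ = 0 → w x = x) :
    ∃ α ∈ Φ, ∀ x, w x = x - (2 * ⟪x, α⟫ / ⟪α, α⟫) • α := by
  lift Φ to Finset E using hfin
  simp only [← reflection_orthogonal_singleton_apply] at hcl hw ⊢
  have hgen : {s : E ≃ₗᵢ[ℝ] E | ∃ α ∈ (Φ : Set E), ∀ x, s x = reflection (ℝ ∙ α)ᗮ x} =
      (fun α => reflection (ℝ ∙ α)ᗮ) '' Φ := by
    ext s
    simp only [← LinearIsometryEquiv.ext_iff, Set.mem_image, eq_comm]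
    rfl
  rw [hgen, eq_reflection_orthogonal_singleton hwv hfix] at hw
  obtain ⟨α, hα, hα0, hαv⟩ := exists_mem_span_of_reflection_mem_reflectionGroup hcl hv hw
  obtain ⟨c, rfl⟩ := mem_span_singleton.mp hαv
  refine ⟨c • v, hα, fun x => ?_⟩
  rw [eq_reflection_orthogonal_singleton hwv hfix,
    reflection_orthogonal_singleton_smul (left_ne_zero_of_smul hα0)]

theorem stmt17 {E : Type*} [NormedAddCommGroup E] [InnerProductSpace ℝ E]
    [FiniteDimensional ℝ E]
    (Φ : Set E) (hfin : Φ.Finite) (h0 : (0 : E) ∉ Φ)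
    (hneg : ∀ α ∈ Φ, -α ∈ Φ)
    (hcl : ∀ α ∈ Φ, ∀ β ∈ Φ, β - (2 * ⟪β, α⟫ / ⟪α, α⟫) • α ∈ Φ)
    (w : E ≃ₗᵢ[ℝ] E)
    (hw : w ∈ Subgroup.closure {s : E ≃ₗᵢ[ℝ] E |
      ∃ α ∈ Φ, ∀ x, s x = x - (2 * ⟪x, α⟫ / ⟪α, α⟫) • α})
    (v : E) (hv : v ≠ 0) (hwv : w v = -v)
    (hfix : ∀ x, ⟪x, v⟫ = 0 → w x = x) :
    ∃ α ∈ Φ, ∀ x, w x = x - (2 * ⟪x, α⟫ / ⟪α, α⟫) • α :=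
  stmt17_general Φ hfin hcl w hw v hv hwv hfix
end
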